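/- Under the hypotheses of the previous statement (θ − τ⊗τ is p-positive semi-definite), for every (p−1)-form ξ and every p-form f in the image of F_θ one has ⟨F_θ^{-1} f, τ ∧ ξ⟩ ≤ ⟨F_θ^{-1} f, f⟩^{1/2} |ξ|, where F_θ^{-1} is the inverse of F_θ restricted to its image. In particular ⟨F_θ^{-1}(τ ∧ ξ), τ ∧ ξ⟩ ≤ |ξ|². -/

import Mathlib

/-- The operator `F_θ = Σ θ_{jk} ω^k ∧ (e_j ⌟ ·)` on coefficient arrays of `p`-forms. -/
def FopMat {n p : ℕ} (θ : Matrix (Fin n) (Fin n) ℝ)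
    (g : (Fin p → Fin n) → ℝ) : (Fin p → Fin n) → ℝ :=
  fun J => ∑ a : Fin p, ∑ i : Fin n, θ (J a) i * g (Function.update J a i)

/-- `g` is the fully antisymmetric coefficient array of a form. -/
def IsAlt {n p : ℕ} (g : (Fin p → Fin n) → ℝ) : Prop :=
  ∀ (J : Fin p → Fin n) (σ : Equiv.Perm (Fin p)),
    g (J ∘ σ) = ((Equiv.Perm.sign σ : ℤ) : ℝ) * g J

/-- Coefficients of the wedge product `τ ∧ ξ`. -/
def wedge1 {n m : ℕ} (τ : Fin n → ℝ) (ξ : (Fin m → Fin n) → ℝ) :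
    (Fin (m + 1) → Fin n) → ℝ :=
  fun J => ∑ a : Fin (m + 1), (-1 : ℝ) ^ (a : ℕ) * τ (J a) * ξ (fun b => J (a.succAbove b))

/-- The inner product of `p`-forms making the increasing-multi-index basis forms
orthonormal, written via a sum over all multi-indices. -/
noncomputable def innerF {n p : ℕ} (f g : (Fin p → Fin n) → ℝ) : ℝ :=
  ((Nat.factorial p : ℝ))⁻¹ * ∑ J : Fin p → Fin n, f J * g J

/-!
The adjoint of `τ ∧ ·` is the interior product `ι_τ`, so `⟨u, τ ∧ ξ⟩ = ⟨ι_τ u, ξ⟩`, and by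
Cauchy–Schwarz the first inequality follows from the coercivity estimate
`|ι_τ u|² ≤ ⟨u, F_θ u⟩` for alternating `u`. As `⟨u, F_A u⟩` is linear in `A` and equals `|ι_τ u|²`
for `A = τ ⊗ τ`, coercivity amounts to `⟨u, F_A u⟩ ≥ 0` for `A = θ − τ ⊗ τ`. In an orthonormal
eigenbasis `(b_k, λ_k)` of `A` one gets `⟨u, F_A u⟩ = ∑ λ_k c_k` with `c_k = |ι_{b_k} u|²`.
Cartan's identity `b ∧ ι_b + ι_b (b ∧ ·) = |b|²` gives `0 ≤ c_k ≤ |u|²`, and Parseval gives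
`∑ c_k = p |u|²`; on this scaled hypersimplex, whose vertices are indicators of `p`-sets, the linear
form `∑ λ_k c_k` is nonnegative because all sums of `p` eigenvalues are.
The second inequality is the first one for `u = F_θ⁻¹(τ ∧ ξ)`, where `⟨u, F_θ u⟩ = ⟨u, τ ∧ ξ⟩`.
-/

open Finset Matrix

def headSlice {n M : ℕ} (g : (Fin (M + 1) → Fin n) → ℝ) (K : Fin M → Fin n) : Fin n → ℝ :=
  fun j => g (Fin.cons j K)

def interiorProd {n M : ℕ} (w : Fin n → ℝ) (g : (Fin (M + 1) → Fin n) → ℝ) :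
    (Fin M → Fin n) → ℝ :=
  fun K => w ⬝ᵥ headSlice g K

section Alternating

lemma IsAlt.apply_comp_swap {n p : ℕ} {g : (Fin p → Fin n) → ℝ} (hg : IsAlt g)
    (J : Fin p → Fin n) {i j : Fin p} (hij : i ≠ j) :
    g (J ∘ Equiv.swap i j) = - g J := by
  simp [hg J, Equiv.Perm.sign_swap hij]

lemma isAlt_of_apply_comp_swap_castSucc_succ {n p : ℕ} {g : (Fin (p + 1) → Fin n) → ℝ}
    (hg : ∀ (J : Fin (p + 1) → Fin n) (t : Fin p),
      g (J ∘ Equiv.swap t.castSucc t.succ) = - g J) :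
    IsAlt g := by
  intro J σ
  revert J
  have hσ : σ ∈ Submonoid.closure
      (Set.range fun t : Fin p => Equiv.swap t.castSucc t.succ) := by
    rw [Equiv.Perm.mclosure_swap_castSucc_succ]; trivial
  induction hσ using Submonoid.closure_induction with
  | mem x hx =>
    obtain ⟨t, rfl⟩ := hx
    intro J
    simp [hg J t, Equiv.Perm.sign_swap (Fin.castSucc_lt_succ (i := t)).ne]
  | one => simp
  | mul x y _ _ ihx ihy =>
    intro J
    rw [Equiv.Perm.coe_mul, ← Function.comp_assoc, ihy, ihx, map_mul]
    push_cast
    ring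

lemma IsAlt.apply_insertNth {n M : ℕ} {g : (Fin (M + 1) → Fin n) → ℝ} (hg : IsAlt g)
    (a : Fin (M + 1)) (j : Fin n) (K : Fin M → Fin n) :
    g (a.insertNth j K) = (-1 : ℝ) ^ (a : ℕ) * g (Fin.cons j K) := by
  have hcycle : a.insertNth j K = (Fin.cons j K : Fin (M + 1) → Fin n) ∘ a.cycleRange := by
    funext i
    rcases eq_or_ne i a with rfl | hi
    · simp
    · obtain ⟨b, rfl⟩ := Fin.exists_succAbove_eq hi
      simp [Fin.cycleRange_succAbove]
  rw [hcycle, hg, Fin.sign_cycleRange]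
  push_cast
  ring

end Alternating

lemma sum_eq_sum_sum_insertNth {n M : ℕ} (a : Fin (M + 1)) (F : (Fin (M + 1) → Fin n) → ℝ) :
    ∑ J, F J = ∑ j, ∑ K : Fin M → Fin n, F (a.insertNth j K) := by
  rw [← (Fin.insertNthEquiv (fun _ => Fin n) a).sum_comp F, Fintype.sum_prod_type]
  rfl

lemma update_insertNth_self {n M : ℕ} (a : Fin (M + 1)) (j i : Fin n) (K : Fin M → Fin n) :
    Function.update (a.insertNth j K : Fin (M + 1) → Fin n) a i = a.insertNth i K := by
  funext x
  rcases eq_or_ne x a with rfl | hx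
  · simp
  · obtain ⟨b, rfl⟩ := Fin.exists_succAbove_eq hx
    simp

section WedgeAlternating

lemma swap_castSucc_succ_succAbove_castSucc {M : ℕ} (t c : Fin M) :
    Equiv.swap t.castSucc t.succ (t.castSucc.succAbove c) = t.succ.succAbove c := by
  simp only [Fin.succAbove, Equiv.swap_apply_def]
  split_ifs <;> simp only [Fin.ext_iff, Fin.lt_def, Fin.val_castSucc, Fin.val_succ] at * <;> omega

lemma swap_castSucc_succ_succAbove_succ {M : ℕ} (t c : Fin M) :
    Equiv.swap t.castSucc t.succ (t.succ.succAbove c) = t.castSucc.succAbove c := by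
  rw [← swap_castSucc_succ_succAbove_castSucc, Equiv.swap_apply_self]

lemma wedge1_term_comp_swap {n M : ℕ} (w : Fin n → ℝ) {ξ : (Fin M → Fin n) → ℝ}
    (hξ : IsAlt ξ) (J : Fin (M + 1) → Fin n) (t : Fin M) (a : Fin (M + 1)) :
    let s := Equiv.swap t.castSucc t.succ
    (-1 : ℝ) ^ (a : ℕ) * w (J (s a)) * ξ (fun b => J (s (a.succAbove b)))
      = -((-1 : ℝ) ^ (s a : ℕ) * w (J (s a)) * ξ (fun b => J ((s a).succAbove b))) := by
  intro s
  by_cases h₁ : a = t.castSucc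
  · subst h₁
    simp only [s, Equiv.swap_apply_left, swap_castSucc_succ_succAbove_castSucc, Fin.val_castSucc,
      Fin.val_succ, pow_succ]
    ring
  by_cases h₂ : a = t.succ
  · subst h₂
    simp only [s, Equiv.swap_apply_right, swap_castSucc_succ_succAbove_succ, Fin.val_castSucc,
      Fin.val_succ, pow_succ]
    ring
  obtain ⟨p, hp⟩ := Fin.exists_succAbove_eq (Ne.symm h₁)
  obtain ⟨q, hq⟩ := Fin.exists_succAbove_eq (Ne.symm h₂)
  have hpq : p ≠ q := by
    rintro rfl
    exact (Fin.castSucc_lt_succ (i := t)).ne (hp.symm.trans hq)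
  have hsa : s a = a := Equiv.swap_apply_of_ne_of_ne h₁ h₂
  have hcomp : (fun b => J (s (a.succAbove b)))
      = (fun b => J (a.succAbove b)) ∘ Equiv.swap p q := by
    funext b
    simp only [s, ← hp, ← hq, Function.comp_apply, Fin.succAbove_right_injective.swap_apply]
  rw [hsa, hcomp, hξ.apply_comp_swap _ hpq]
  ring

lemma isAlt_wedge1 {n M : ℕ} (w : Fin n → ℝ) {ξ : (Fin M → Fin n) → ℝ} (hξ : IsAlt ξ) :
    IsAlt (wedge1 w ξ) := by
  refine isAlt_of_apply_comp_swap_castSucc_succ fun J t => ?_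
  simp only [wedge1, Function.comp_apply, wedge1_term_comp_swap w hξ J t, sum_neg_distrib]
  rw [Equiv.sum_comp (Equiv.swap t.castSucc t.succ)
    (fun a => (-1 : ℝ) ^ (a : ℕ) * w (J a) * ξ (fun b => J (a.succAbove b)))]

end WedgeAlternating

section innerF

variable {n p : ℕ}

lemma innerF_comm (f g : (Fin p → Fin n) → ℝ) : innerF f g = innerF g f := by
  simp only [innerF, mul_comm (f _)]

lemma innerF_self_nonneg (f : (Fin p → Fin n) → ℝ) : 0 ≤ innerF f f :=
  mul_nonneg (by positivity) (sum_nonneg fun J _ => mul_self_nonneg (f J))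

lemma innerF_sub_left (f f' g : (Fin p → Fin n) → ℝ) :
    innerF (f - f') g = innerF f g - innerF f' g := by
  simp only [innerF, Pi.sub_apply, sub_mul, sum_sub_distrib, mul_sub]

lemma innerF_le_sqrt_mul_sqrt (f g : (Fin p → Fin n) → ℝ) :
    innerF f g ≤ √(innerF f f) * √(innerF g g) := by
  have hc : (0 : ℝ) ≤ (p.factorial : ℝ)⁻¹ := by positivity
  calc innerF f g ≤ (p.factorial : ℝ)⁻¹ * (√(∑ J, f J ^ 2) * √(∑ J, g J ^ 2)) :=
        mul_le_mul_of_nonneg_left (Real.sum_mul_le_sqrt_mul_sqrt _ f g) hc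
    _ = √(innerF f f) * √(innerF g g) := by
        simp only [innerF, ← sq, Real.sqrt_mul hc]
        linear_combination (-(√(∑ J, f J ^ 2) * √(∑ J, g J ^ 2))) * Real.mul_self_sqrt hc

end innerF

section Adjoint

lemma sum_wedge1_mul {n M : ℕ} (w : Fin n → ℝ) (ξ : (Fin M → Fin n) → ℝ)
    {g : (Fin (M + 1) → Fin n) → ℝ} (hg : IsAlt g) :
    ∑ J, wedge1 w ξ J * g J = (M + 1) * ∑ K, ξ K * interiorProd w g K := by
  have hslot : ∀ a : Fin (M + 1),
      ∑ J : Fin (M + 1) → Fin n,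
          (-1 : ℝ) ^ (a : ℕ) * w (J a) * ξ (fun b => J (a.succAbove b)) * g J
        = ∑ K, ξ K * interiorProd w g K := by
    intro a
    rw [sum_eq_sum_sum_insertNth a, sum_comm]
    refine sum_congr rfl fun K _ => ?_
    simp only [interiorProd, headSlice, dotProduct, mul_sum, Fin.insertNth_apply_same,
      Fin.insertNth_apply_succAbove, hg.apply_insertNth]
    refine sum_congr rfl fun j _ => ?_
    linear_combination (w j * ξ K * g (Fin.cons j K))
      * pow_mul_pow_eq_one (a : ℕ) (by norm_num : (-1 : ℝ) * -1 = 1)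
  simp only [wedge1, sum_mul]
  rw [sum_comm]
  simp [hslot]

lemma innerF_wedge1_left {n M : ℕ} (w : Fin n → ℝ) (ξ : (Fin M → Fin n) → ℝ)
    {g : (Fin (M + 1) → Fin n) → ℝ} (hg : IsAlt g) :
    innerF (wedge1 w ξ) g = innerF ξ (interiorProd w g) := by
  rw [innerF, sum_wedge1_mul w ξ hg, innerF, Nat.factorial_succ]
  push_cast
  field_simp

lemma wedge1_cons {n M : ℕ} (w : Fin n → ℝ) (g : (Fin (M + 1) → Fin n) → ℝ) (j : Fin n)
    (J : Fin (M + 1) → Fin n) :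
    wedge1 w g (Fin.cons j J) = w j * g J - wedge1 w (fun K => g (Fin.cons j K)) J := by
  have hsucc : ∀ b : Fin (M + 1),
      (fun c => (Fin.cons j J : Fin (M + 2) → Fin n) (b.succ.succAbove c))
        = Fin.cons j fun c => J (b.succAbove c) := by
    intro b
    funext c
    cases c using Fin.cases <;> simp [Fin.succ_succAbove_succ]
  rw [wedge1, Fin.sum_univ_succ, sub_eq_add_neg, wedge1, ← sum_neg_distrib]
  congr 1
  · simp
  · refine sum_congr rfl fun b _ => ?_
    simp only [hsucc, Fin.cons_succ, Fin.val_succ, pow_succ]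
    ring

lemma sum_mul_wedge1 {ι : Type*} [Fintype ι] {n M : ℕ} (c : ι → ℝ) (w : Fin n → ℝ)
    (ξ : ι → (Fin M → Fin n) → ℝ) (J : Fin (M + 1) → Fin n) :
    ∑ i, c i * wedge1 w (ξ i) J = wedge1 w (fun K => ∑ i, c i * ξ i K) J := by
  simp only [wedge1, mul_sum]
  rw [sum_comm]
  exact sum_congr rfl fun a _ => sum_congr rfl fun i _ => by ring

lemma wedge1_interiorProd_add_interiorProd_wedge1 {n M : ℕ} (w : Fin n → ℝ)
    (g : (Fin (M + 1) → Fin n) → ℝ) :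
    wedge1 w (interiorProd w g) + interiorProd w (wedge1 w g) = (w ⬝ᵥ w) • g := by
  funext J
  have hlin : ∑ j, w j * wedge1 w (fun K => g (Fin.cons j K)) J
      = wedge1 w (interiorProd w g) J :=
    sum_mul_wedge1 w w (fun j K => g (Fin.cons j K)) J
  show wedge1 w (interiorProd w g) J + ∑ j, w j * wedge1 w g (Fin.cons j J) = (w ⬝ᵥ w) * g J
  simp only [wedge1_cons, mul_sub, sum_sub_distrib, hlin, dotProduct, sum_mul, mul_assoc]
  ring

lemma innerF_interiorProd_self_le {n M : ℕ} {w : Fin n → ℝ} (hw : w ⬝ᵥ w = 1)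
    {g : (Fin (M + 1) → Fin n) → ℝ} (hg : IsAlt g) :
    innerF (interiorProd w g) (interiorProd w g) ≤ innerF g g := by
  have hcartan : wedge1 w (interiorProd w g) = g - interiorProd w (wedge1 w g) := by
    rw [eq_sub_iff_add_eq, wedge1_interiorProd_add_interiorProd_wedge1, hw, one_smul]
  calc innerF (interiorProd w g) (interiorProd w g)
      = innerF (wedge1 w (interiorProd w g)) g := (innerF_wedge1_left w _ hg).symm
    _ = innerF g g - innerF (interiorProd w (wedge1 w g)) g := by rw [hcartan, innerF_sub_left]
    _ = innerF g g - innerF (wedge1 w g) (wedge1 w g) := by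
        rw [innerF_comm (interiorProd w _), innerF_wedge1_left w g (isAlt_wedge1 w hg)]
    _ ≤ innerF g g := sub_le_self _ (innerF_self_nonneg _)

end Adjoint

section QuadraticForm

lemma sum_FopMat_mul_self {n M : ℕ} (A : Matrix (Fin n) (Fin n) ℝ)
    {g : (Fin (M + 1) → Fin n) → ℝ} (hg : IsAlt g) :
    ∑ J, FopMat A g J * g J = (M + 1) * ∑ K, headSlice g K ⬝ᵥ A *ᵥ headSlice g K := by
  have hslot : ∀ a : Fin (M + 1),
      ∑ J : Fin (M + 1) → Fin n, ∑ i, A (J a) i * g (Function.update J a i) * g J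
        = ∑ K, headSlice g K ⬝ᵥ A *ᵥ headSlice g K := by
    intro a
    rw [sum_eq_sum_sum_insertNth a, sum_comm]
    refine sum_congr rfl fun K _ => ?_
    simp only [headSlice, dotProduct, mulVec, mul_sum, Fin.insertNth_apply_same,
      update_insertNth_self, hg.apply_insertNth]
    refine sum_congr rfl fun j _ => sum_congr rfl fun i _ => ?_
    linear_combination (A j i * g (Fin.cons j K) * g (Fin.cons i K))
      * pow_mul_pow_eq_one (a : ℕ) (by norm_num : (-1 : ℝ) * -1 = 1)
  simp only [FopMat, sum_mul]
  rw [sum_comm]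
  simp [hslot]

lemma innerF_FopMat {n M : ℕ} (A : Matrix (Fin n) (Fin n) ℝ) {g : (Fin (M + 1) → Fin n) → ℝ}
    (hg : IsAlt g) :
    innerF g (FopMat A g) = (M.factorial : ℝ)⁻¹ * ∑ K, headSlice g K ⬝ᵥ A *ᵥ headSlice g K := by
  rw [innerF_comm, innerF, sum_FopMat_mul_self A hg, Nat.factorial_succ]
  push_cast
  field_simp

lemma innerF_interiorProd_self {n M : ℕ} (w : Fin n → ℝ) (g : (Fin (M + 1) → Fin n) → ℝ) :
    innerF (interiorProd w g) (interiorProd w g)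
      = (M.factorial : ℝ)⁻¹ * ∑ K, (w ⬝ᵥ headSlice g K) ^ 2 := by
  simp only [innerF, interiorProd, sq]

lemma sum_mul_self_eq_sum_headSlice {n M : ℕ} (g : (Fin (M + 1) → Fin n) → ℝ) :
    ∑ J, g J * g J = ∑ K, headSlice g K ⬝ᵥ headSlice g K := by
  rw [sum_eq_sum_sum_insertNth 0, sum_comm]
  simp [headSlice, dotProduct]

lemma innerF_FopMat_sub_vecMulVec {n M : ℕ} (A : Matrix (Fin n) (Fin n) ℝ) (τ : Fin n → ℝ)
    {g : (Fin (M + 1) → Fin n) → ℝ} (hg : IsAlt g) :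
    innerF g (FopMat (A - vecMulVec τ τ) g)
      = innerF g (FopMat A g) - innerF (interiorProd τ g) (interiorProd τ g) := by
  simp only [innerF_FopMat _ hg, innerF_interiorProd_self, ← mul_sub, ← sum_sub_distrib,
    sub_mulVec, dotProduct_sub, vecMulVec_mulVec]
  congr 1
  refine sum_congr rfl fun K _ => ?_
  simp [dotProduct_comm τ, sq]

end QuadraticForm

section Spectral

lemma Matrix.IsHermitian.dotProduct_mulVec_eq_sum_eigenvalues {n : Type*} [Fintype n]
    [DecidableEq n] {A : Matrix n n ℝ} (hA : A.IsHermitian) (v : n → ℝ) :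
    v ⬝ᵥ A *ᵥ v = ∑ k, hA.eigenvalues k * (⇑(hA.eigenvectorBasis k) ⬝ᵥ v) ^ 2 := by
  have hsymm : Aᵀ = A := by simpa [conjTranspose_eq_transpose_of_trivial] using hA.eq
  have hcoord : ∀ k, (A *ᵥ v) ⬝ᵥ ⇑(hA.eigenvectorBasis k)
      = hA.eigenvalues k * (⇑(hA.eigenvectorBasis k) ⬝ᵥ v) := by
    intro k
    rw [dotProduct_comm, dotProduct_mulVec, ← mulVec_transpose, hsymm,
      hA.mulVec_eigenvectorBasis, smul_dotProduct, smul_eq_mul]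
  have hparseval := hA.eigenvectorBasis.sum_inner_mul_inner (WithLp.toLp 2 v)
    (WithLp.toLp 2 (A *ᵥ v))
  simp only [EuclideanSpace.inner_eq_star_dotProduct, star_trivial] at hparseval
  rw [dotProduct_comm, ← hparseval]
  refine sum_congr rfl fun k _ => ?_
  rw [hcoord]
  ring

lemma OrthonormalBasis.sum_dotProduct_sq {ι n : Type*} [Fintype ι] [Fintype n]
    (b : OrthonormalBasis ι ℝ (EuclideanSpace ℝ n)) (v : n → ℝ) :
    ∑ k, (⇑(b k) ⬝ᵥ v) ^ 2 = v ⬝ᵥ v := by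
  have hparseval := b.sum_inner_mul_inner (WithLp.toLp 2 v) (WithLp.toLp 2 v)
  simp only [EuclideanSpace.inner_eq_star_dotProduct, star_trivial] at hparseval
  rw [← hparseval]
  refine sum_congr rfl fun k _ => ?_
  rw [sq, dotProduct_comm v]

lemma OrthonormalBasis.dotProduct_self {ι n : Type*} [Fintype ι] [Fintype n]
    (b : OrthonormalBasis ι ℝ (EuclideanSpace ℝ n)) (k : ι) :
    ⇑(b k) ⬝ᵥ ⇑(b k) = 1 := by
  simpa only [EuclideanSpace.inner_eq_star_dotProduct, star_trivial] using b.inner_eq_one k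

lemma OrthonormalBasis.sum_innerF_interiorProd_self {ι : Type*} [Fintype ι] {n M : ℕ}
    (b : OrthonormalBasis ι ℝ (EuclideanSpace ℝ (Fin n))) (g : (Fin (M + 1) → Fin n) → ℝ) :
    ∑ k, innerF (interiorProd (b k) g) (interiorProd (b k) g) = (M + 1) * innerF g g := by
  simp only [innerF_interiorProd_self, ← mul_sum]
  rw [sum_comm]
  simp only [OrthonormalBasis.sum_dotProduct_sq, innerF, ← sum_mul_self_eq_sum_headSlice,
    Nat.factorial_succ]
  push_cast
  field_simp

end Spectral

section Hypersimplex

lemma exists_card_eq_forall_mem_forall_notMem_le {ι α : Type*} [Fintype ι] [DecidableEq ι]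
    [LinearOrder α] (f : ι → α) {p : ℕ} (hp : p ≤ Fintype.card ι) :
    ∃ s : Finset ι, s.card = p ∧ ∀ i ∈ s, ∀ j ∉ s, f i ≤ f j := by
  induction p with
  | zero => exact ⟨∅, rfl, by simp⟩
  | succ p ih =>
    obtain ⟨s, hcard, hs⟩ := ih (Nat.le_of_succ_le hp)
    have hne : sᶜ.Nonempty := by
      rw [← card_pos, card_compl]; omega
    obtain ⟨l, hl, hmin⟩ := sᶜ.exists_min_image f hne
    rw [mem_compl] at hl
    refine ⟨insert l s, by rw [card_insert_of_notMem hl, hcard], fun i hi j hj => ?_⟩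
    rw [mem_insert, not_or] at hj
    rcases mem_insert.mp hi with rfl | hi
    · exact hmin j (mem_compl.mpr hj.2)
    · exact hs i hi j hj.2

lemma sum_mul_nonneg_of_sum_nonneg_of_card_eq {ι : Type*} [Fintype ι] {p : ℕ} (hp : 0 < p)
    (lam c : ι → ℝ) (C : ℝ) (hlam : ∀ s : Finset ι, s.card = p → 0 ≤ ∑ i ∈ s, lam i)
    (hc₀ : ∀ i, 0 ≤ c i) (hcC : ∀ i, c i ≤ C) (hsum : ∑ i, c i = p * C) :
    0 ≤ ∑ i, lam i * c i := by
  classical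
  rcases le_or_gt C 0 with hC | hC
  · simp [fun i => le_antisymm ((hcC i).trans hC) (hc₀ i)]
  have hpι : p ≤ Fintype.card ι := by
    have : (p : ℝ) * C ≤ Fintype.card ι * C := by
      simpa [← hsum] using sum_le_sum fun i (_ : i ∈ univ) => hcC i
    exact_mod_cast le_of_mul_le_mul_right this hC
  obtain ⟨s, hcard, hs⟩ := exists_card_eq_forall_mem_forall_notMem_le lam hpι
  obtain ⟨k, hk, hmax⟩ := s.exists_max_image lam (card_pos.mp (hcard ▸ hp))
  -- `t` separates the values of `lam` on `s` from those off `s`, so that every term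
  -- `(lam i - t) * (c i - C 𝟙_s i)` is nonnegative
  set t := lam k
  have hterm : ∀ i, (lam i - t) * (if i ∈ s then C else 0) ≤ (lam i - t) * c i := by
    intro i
    split_ifs with hi
    · exact mul_le_mul_of_nonpos_left (hcC i) (sub_nonpos.mpr (hmax i hi))
    · rw [mul_zero]; exact mul_nonneg (sub_nonneg.mpr (hs k hk i hi)) (hc₀ i)
  have hvertex : ∑ i, (lam i - t) * (if i ∈ s then C else 0)
      = C * ∑ i ∈ s, lam i - t * (p * C) := by
    simp only [mul_ite, mul_zero, sum_ite_mem, univ_inter, sub_mul, sum_sub_distrib, sum_const,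
      hcard, nsmul_eq_mul, ← sum_mul]
    ring
  calc 0 ≤ C * ∑ i ∈ s, lam i := mul_nonneg hC.le (hlam s hcard)
    _ = ∑ i, (lam i - t) * (if i ∈ s then C else 0) + t * (p * C) := by rw [hvertex]; ring
    _ ≤ ∑ i, (lam i - t) * c i + t * (p * C) := by grw [sum_le_sum fun i _ => hterm i]
    _ = ∑ i, lam i * c i := by simp only [sub_mul, sum_sub_distrib, ← mul_sum, hsum]; ring

end Hypersimplex

lemma innerF_FopMat_nonneg {n M : ℕ} {A : Matrix (Fin n) (Fin n) ℝ} (hA : A.IsHermitian)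
    (hpsd : ∀ s : Finset (Fin n), s.card = M + 1 → 0 ≤ ∑ i ∈ s, hA.eigenvalues i)
    {g : (Fin (M + 1) → Fin n) → ℝ} (hg : IsAlt g) :
    0 ≤ innerF g (FopMat A g) := by
  set b := hA.eigenvectorBasis
  have hspectral : innerF g (FopMat A g)
      = ∑ k, hA.eigenvalues k * innerF (interiorProd (b k) g) (interiorProd (b k) g) := by
    simp only [innerF_FopMat A hg, hA.dotProduct_mulVec_eq_sum_eigenvalues,
      innerF_interiorProd_self, mul_sum]
    rw [sum_comm]
    exact sum_congr rfl fun k _ => sum_congr rfl fun K _ => by ring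
  rw [hspectral]
  exact sum_mul_nonneg_of_sum_nonneg_of_card_eq M.succ_pos _ _ _ hpsd
    (fun k => innerF_self_nonneg _) (fun k => innerF_interiorProd_self_le (b.dotProduct_self k) hg)
    (by rw [b.sum_innerF_interiorProd_self g]; push_cast; ring)

lemma innerF_interiorProd_self_le_innerF_FopMat {n M : ℕ} (θ : Matrix (Fin n) (Fin n) ℝ)
    (τ : Fin n → ℝ) (hH : (θ - vecMulVec τ τ).IsHermitian)
    (hpsd : ∀ s : Finset (Fin n), s.card = M + 1 → 0 ≤ ∑ i ∈ s, hH.eigenvalues i)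
    {u : (Fin (M + 1) → Fin n) → ℝ} (hu : IsAlt u) :
    innerF (interiorProd τ u) (interiorProd τ u) ≤ innerF u (FopMat θ u) := by
  have hnonneg := innerF_FopMat_nonneg hH hpsd hu
  rw [innerF_FopMat_sub_vecMulVec θ τ hu] at hnonneg
  linarith

lemma innerF_wedge1_le_sqrt_mul_sqrt {n M : ℕ} (θ : Matrix (Fin n) (Fin n) ℝ)
    (τ : Fin n → ℝ) (hH : (θ - vecMulVec τ τ).IsHermitian)
    (hpsd : ∀ s : Finset (Fin n), s.card = M + 1 → 0 ≤ ∑ i ∈ s, hH.eigenvalues i)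
    (ξ : (Fin M → Fin n) → ℝ) {u : (Fin (M + 1) → Fin n) → ℝ} (hu : IsAlt u) :
    innerF u (wedge1 τ ξ) ≤ √(innerF u (FopMat θ u)) * √(innerF ξ ξ) := by
  calc innerF u (wedge1 τ ξ) = innerF ξ (interiorProd τ u) := by
        rw [innerF_comm, innerF_wedge1_left τ ξ hu]
    _ ≤ √(innerF ξ ξ) * √(innerF (interiorProd τ u) (interiorProd τ u)) :=
        innerF_le_sqrt_mul_sqrt _ _
    _ ≤ √(innerF ξ ξ) * √(innerF u (FopMat θ u)) := by
        gcongr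
        exact innerF_interiorProd_self_le_innerF_FopMat θ τ hH hpsd hu
    _ = √(innerF u (FopMat θ u)) * √(innerF ξ ξ) := mul_comm _ _

lemma le_of_le_sqrt_mul_sqrt {x c : ℝ} (hx : 0 ≤ x) (hc : 0 ≤ c) (h : x ≤ √x * √c) : x ≤ c := by
  nlinarith [Real.mul_self_sqrt hx, Real.mul_self_sqrt hc, Real.sqrt_nonneg x, Real.sqrt_nonneg c]

theorem stmt6_general (n m : ℕ) (θ : Matrix (Fin n) (Fin n) ℝ)
    (τ : Fin n → ℝ)
    (hH : (θ - Matrix.vecMulVec τ τ).IsHermitian)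
    (hpsd : ∀ s : Finset (Fin n), s.card = m + 1 → 0 ≤ ∑ i ∈ s, hH.eigenvalues i)
    (ξ : (Fin m → Fin n) → ℝ)
    (u : (Fin (m + 1) → Fin n) → ℝ) (hu : IsAlt u)
    (h : (Fin (m + 1) → Fin n) → ℝ) (hh : IsAlt h)
    (hhw : FopMat θ h = wedge1 τ ξ) :
    innerF u (wedge1 τ ξ)
        ≤ Real.sqrt (innerF u (FopMat θ u)) * Real.sqrt (innerF ξ ξ) ∧
    innerF h (wedge1 τ ξ) ≤ innerF ξ ξ := by
  refine ⟨innerF_wedge1_le_sqrt_mul_sqrt θ τ hH hpsd ξ hu, ?_⟩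
  have hpos : 0 ≤ innerF h (FopMat θ h) :=
    (innerF_self_nonneg _).trans (innerF_interiorProd_self_le_innerF_FopMat θ τ hH hpsd hh)
  have hbound := innerF_wedge1_le_sqrt_mul_sqrt θ τ hH hpsd ξ hh
  rw [← hhw] at hbound ⊢
  exact le_of_le_sqrt_mul_sqrt hpos (innerF_self_nonneg ξ) hbound

/-- If `θ − τ ⊗ τ` is `p`-positive semi-definite (`p = m+1`), then for any `p`-form
`f = F_θ u` in the image of `F_θ` (so `F_θ⁻¹ f = u`, with `u ∈ Im F_θ`), one has
`⟨F_θ⁻¹ f, τ∧ξ⟩ ≤ ⟨F_θ⁻¹ f, f⟩^{1/2} |ξ|`; in particular, writing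
`F_θ⁻¹(τ∧ξ) = h` with `h ∈ Im F_θ`, `⟨F_θ⁻¹(τ∧ξ), τ∧ξ⟩ ≤ |ξ|²`. -/
theorem stmt6 (n m : ℕ) (θ : Matrix (Fin n) (Fin n) ℝ) (hθ : θ.IsSymm)
    (τ : Fin n → ℝ)
    (hH : (θ - Matrix.vecMulVec τ τ).IsHermitian)
    (hpsd : ∀ s : Finset (Fin n), s.card = m + 1 → 0 ≤ ∑ i ∈ s, hH.eigenvalues i)
    (ξ : (Fin m → Fin n) → ℝ) (hξ : IsAlt ξ)
    (u : (Fin (m + 1) → Fin n) → ℝ) (hu : IsAlt u)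
    (huIm : ∃ w, IsAlt w ∧ FopMat θ w = u)
    (h : (Fin (m + 1) → Fin n) → ℝ) (hh : IsAlt h)
    (hhIm : ∃ w, IsAlt w ∧ FopMat θ w = h)
    (hhw : FopMat θ h = wedge1 τ ξ) :
    innerF u (wedge1 τ ξ)
        ≤ Real.sqrt (innerF u (FopMat θ u)) * Real.sqrt (innerF ξ ξ) ∧
    innerF h (wedge1 τ ξ) ≤ innerF ξ ξ :=
  stmt6_general n m θ τ hH hpsd ξ u hu h hh hhw
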